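/- arXiv:1507.03158 — 2 statements merged into one kernel-verified Lean document; each statement's English description precedes it below -/
import Mathlib

section
/- Let a, b, c, d, e, g be real numbers and define f : ℝ → ℝ by f(θ) = a·sin²θ + b·sin θ·cos θ + c·cos²θ + d·sin θ + e·cos θ + g. If f is not identically zero on [0, 2π), then the set {θ ∈ [0, 2π) : f(θ) = 0} has at most 4 elements. -/
open Real

open Polynomial in
/-- Key evaluation lemma: the explicit degree-4 complex polynomial evaluated
at `exp (θ * I)` equals `exp (θ * I)^2 * f θ`. -/
private lemma trig_poly_eval (a b c d e g : ℝ) (θ : ℝ) :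
    (C (((c : ℂ) - a) / 4 - Complex.I * b / 4) * X ^ 4
      + C (((e : ℂ) - Complex.I * d) / 2) * X ^ 3
      + C (((a : ℂ) + c) / 2 + g) * X ^ 2
      + C (((e : ℂ) + Complex.I * d) / 2) * X
      + C (((c : ℂ) - a) / 4 + Complex.I * b / 4)).eval (Complex.exp (θ * Complex.I))
    = Complex.exp (θ * Complex.I) ^ 2 *
        ((a * Real.sin θ ^ 2 + b * Real.sin θ * Real.cos θ + c * Real.cos θ ^ 2
          + d * Real.sin θ + e * Real.cos θ + g : ℝ) : ℂ) := by
  rw [Complex.exp_mul_I]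
  simp only [Polynomial.eval_add, Polynomial.eval_mul, Polynomial.eval_pow,
    Polynomial.eval_C, Polynomial.eval_X]
  push_cast
  set s : ℂ := Complex.sin (θ : ℂ)
  set co : ℂ := Complex.cos (θ : ℂ)
  have hpyth : s ^ 2 + co ^ 2 = 1 := Complex.sin_sq_add_cos_sq (θ : ℂ)
  linear_combination ((-1/2:ℂ)*(e:ℂ)*co + (-1/2:ℂ)*(e:ℂ)*s*Complex.I + (-1/2:ℂ)*(d:ℂ)*co*Complex.I + (1/2:ℂ)*(d:ℂ)*s + (-1/4:ℂ)*(c:ℂ) + (-3/4:ℂ)*(c:ℂ)*co^2 + (-1:ℂ)*(c:ℂ)*s*co*Complex.I + (1/4:ℂ)*(c:ℂ)*s^2 + (-1/4:ℂ)*(b:ℂ)*Complex.I + (-1/4:ℂ)*(b:ℂ)*co^2*Complex.I + (-1/4:ℂ)*(b:ℂ)*s^2*Complex.I + (1/4:ℂ)*(a:ℂ) + (-1/4:ℂ)*(a:ℂ)*co^2 + (-1:ℂ)*(a:ℂ)*s*co*Complex.I + (3/4:ℂ)*(a:ℂ)*s^2) * hpyth + ((1/2:ℂ)*(e:ℂ)*s^2*co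 + (1/2:ℂ)*(e:ℂ)*s^3*Complex.I + (1/2:ℂ)*(d:ℂ)*s + (-3/2:ℂ)*(d:ℂ)*s*co^2 + (-3/2:ℂ)*(d:ℂ)*s^2*co*Complex.I + (-1/2:ℂ)*(d:ℂ)*s^3 + (-1/2:ℂ)*(d:ℂ)*s^3*Complex.I^2 + (1/2:ℂ)*(c:ℂ)*s^2 + (1/2:ℂ)*(c:ℂ)*s^2*co^2 + (c:ℂ)*s^3*co*Complex.I + (-1/4:ℂ)*(c:ℂ)*s^4 + (1/4:ℂ)*(c:ℂ)*s^4*Complex.I^2 + (-1:ℂ)*(b:ℂ)*s*co^3 + (-3/2:ℂ)*(b:ℂ)*s^2*co^2*Complex.I + (-1:ℂ)*(b:ℂ)*s^3*co*Complex.I^2 + (1/4:ℂ)*(b:ℂ)*s^4*Complex.I + (-1/4:ℂ)*(b:ℂ)*s^4*Complex.I^3 + (1/2:ℂ)*(a:ℂ)*s^2 + (-3/2:ℂ)*(a:ℂ)*s^2*co^2 + (-1:ℂ)*(a:ℂ)*s^3*co*Complex.I + (-3/4:ℂ)*(a:ℂ)*s^4 + (-1/4:ℂ)*(a:ℂ)*s^4*Complex.I^2)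 * Complex.I_sq

/-- A degree-2 trigonometric polynomial
f(θ) = a·sin²θ + b·sinθ·cosθ + c·cos²θ + d·sinθ + e·cosθ + g which is not
identically zero on [0, 2π) has at most 4 zeros there. -/
theorem trig_poly_deg2_at_most_four_zeros
    (a b c d e g : ℝ) (f : ℝ → ℝ)
    (hf : ∀ θ : ℝ, f θ = a * sin θ ^ 2 + b * sin θ * cos θ + c * cos θ ^ 2
        + d * sin θ + e * cos θ + g)
    (hne : ¬ ∀ θ ∈ Set.Ico (0 : ℝ) (2 * π), f θ = 0) :
    Set.encard {θ ∈ Set.Ico (0 : ℝ) (2 * π) | f θ = 0} ≤ 4 := by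
  classical
  push_neg at hne
  obtain ⟨θ₀, hθ₀mem, hθ₀⟩ := hne
  set P : Polynomial ℂ :=
    Polynomial.C (((c : ℂ) - a) / 4 - Complex.I * b / 4) * Polynomial.X ^ 4
      + Polynomial.C (((e : ℂ) - Complex.I * d) / 2) * Polynomial.X ^ 3
      + Polynomial.C (((a : ℂ) + c) / 2 + g) * Polynomial.X ^ 2
      + Polynomial.C (((e : ℂ) + Complex.I * d) / 2) * Polynomial.X
      + Polynomial.C (((c : ℂ) - a) / 4 + Complex.I * b / 4) with hP
  have heval : ∀ θ : ℝ, P.eval (Complex.exp (θ * Complex.I))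
      = Complex.exp (θ * Complex.I) ^ 2 * ((f θ : ℝ) : ℂ) := by
    intro θ
    rw [hP, hf θ]
    exact trig_poly_eval a b c d e g θ
  -- P is nonzero
  have hPne : P ≠ 0 := by
    intro h0
    apply hθ₀
    have := heval θ₀
    rw [h0, Polynomial.eval_zero] at this
    have hz : Complex.exp (θ₀ * Complex.I) ≠ 0 := Complex.exp_ne_zero _
    have : ((f θ₀ : ℝ) : ℂ) = 0 := by
      field_simp at this
      exact (mul_eq_zero.mp this.symm).resolve_left (pow_ne_zero 2 hz)
    exact_mod_cast this
  -- degree bound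
  have hdeg : P.natDegree ≤ 4 := by
    rw [hP]
    compute_degree
  -- injectivity of θ ↦ exp (θ I) on [0, 2π)
  have hinj : Set.InjOn (fun θ : ℝ => Complex.exp (θ * Complex.I))
      {θ ∈ Set.Ico (0 : ℝ) (2 * π) | f θ = 0} := by
    intro x hx y hy hxy
    simp only [Set.mem_setOf_eq] at hx hy
    have hx' := hx.1
    have hy' := hy.1
    rw [Complex.exp_eq_exp_iff_exists_int] at hxy
    obtain ⟨n, hn⟩ := hxy
    have hI : (Complex.I : ℂ) ≠ 0 := Complex.I_ne_zero
    have hn' : (x : ℂ) = y + n * (2 * π) := by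
      have : (x : ℂ) * Complex.I = (y + n * (2 * π)) * Complex.I := by
        rw [hn]; ring
      exact mul_right_cancel₀ hI this
    have hreal : x = y + n * (2 * π) := by exact_mod_cast hn'
    have hpi : (0 : ℝ) < π := Real.pi_pos
    have hbound : |(n : ℝ)| < 1 := by
      have h1 : x - y = n * (2 * π) := by linarith
      have h2 : |x - y| < 2 * π := by
        rw [abs_lt]
        constructor <;> [linarith [hx'.1, hx'.2, hy'.1, hy'.2]; linarith [hx'.1, hx'.2, hy'.1, hy'.2]]
      rw [h1, abs_mul, abs_of_pos (by linarith : (0:ℝ) < 2 * π)] at h2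
      have := (mul_lt_iff_lt_one_left (by linarith : (0:ℝ) < 2 * π)).mp (by linarith)
      nlinarith [abs_nonneg ((n : ℝ))]
    have hn0 : n = 0 := by
      by_contra hne0
      have h1 : (1 : ℤ) ≤ |n| := Int.one_le_abs hne0
      have : (1 : ℝ) ≤ |(n : ℝ)| := by
        rw [← Int.cast_abs]; exact_mod_cast h1
      linarith
    rw [hn0] at hreal
    simpa using hreal
  -- image of zero set lies in the roots of P
  have himg : (fun θ : ℝ => Complex.exp (θ * Complex.I)) ''
      {θ ∈ Set.Ico (0 : ℝ) (2 * π) | f θ = 0} ⊆ ↑P.roots.toFinset := by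
    rintro z ⟨θ, hθ, rfl⟩
    simp only [Set.mem_setOf_eq] at hθ
    simp only [Finset.coe_sort_coe, Multiset.mem_toFinset, Finset.mem_coe]
    rw [Polynomial.mem_roots hPne]
    have := heval θ
    rw [hθ.2] at this
    simpa [Polynomial.IsRoot] using this
  calc Set.encard {θ ∈ Set.Ico (0 : ℝ) (2 * π) | f θ = 0}
      = Set.encard ((fun θ : ℝ => Complex.exp (θ * Complex.I)) ''
          {θ ∈ Set.Ico (0 : ℝ) (2 * π) | f θ = 0}) := (hinj.encard_image).symm
    _ ≤ Set.encard (↑P.roots.toFinset : Set ℂ) := Set.encard_le_encard himg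
    _ = (P.roots.toFinset.card : ℕ∞) := Set.encard_coe_eq_coe_finsetCard _
    _ ≤ (Multiset.card P.roots : ℕ∞) := by exact_mod_cast Multiset.toFinset_card_le _
    _ ≤ (P.natDegree : ℕ∞) := by exact_mod_cast Polynomial.card_roots' P
    _ ≤ 4 := by exact_mod_cast hdeg
end

section
/- Consider the hydropower-unit system with state x = (θ_Δ, s, Q, Ψ_d, Ψ_q, Ψ_r, Ψ_rd, Ψ_rq, μ_Δ) and right-hand side F(x) given by: θ_Δ' = ω₀·s; s' = (1/T_J)·( k·Q³/(C²·(μ₀+μ_Δ)²·ω₀²·(1+s)) − Ψ_d·i_q + Ψ_q·i_d ); Q' = (S/(lρ))·(p_u − p_l − Q²/(C²·(μ₀+μ_Δ)²)); Ψ_d' = −ω₀·(1+s)·Ψ_q − ω₀·r·i_d + ω₀·U·sin(θ₀+θ_Δ); Ψ_q' = ω₀·(1+s)·Ψ_d − ω₀·r·i_q − ω₀·U·cos(θ₀+θ_Δ); Ψ_r' = (E_r − E_q)/T_r; Ψ_rd' = −E_rq/T_rd; Ψ_rq' = E_rd/T_rq; μ_Δ' = χ_ρ(−σ·χ_s(s)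 − χ_μ(μ_Δ,μ₀) − ξ_ρ(μ_Δ,μ₀))/T_c, where i_d, i_q, E_q, E_rd, E_rq satisfy the flux-linkage relations Ψ_d = x_d·i_d + E_q + E_rq, Ψ_q = x_q·i_q − E_rd, Ψ_r = (x_ad²/x_r)·i_d + E_q + (x_ad/x_r)·E_rq, Ψ_rd = (x_ad²/x_rd)·i_d + E_rq + (x_ad/x_rd)·(E_q + E_rq), Ψ_rq = (x_aq²/x_rq)·i_q − E_rd − (x_aq/x_rq)·E_rd. Assume ω₀, T_J, T_c, T_r, T_rd, T_rq, S, l, ρ, C, k, μ₀ > 0, p_u > p_l, r² + x_d·x_q ≠ 0, z > 0, ρ_o ≤ 0 ≤ ρ_c, μ_min ≤ μ₀ ≤ μ_max, and let θ := θ₀ + θ_Δ^st for a fixed θ_Δ^st. Define Q^st := C·μ₀·√(p_u − p_l), i_d^st := (r·U·sin θ + x_q·U·cos θ − x_q·E_r)/(r² + x_d·x_q), i_q^st := (x_d·U·sin θ − r·U·cos θ + r·E_r)/(r² + x_d·x_q), Ψ_d^st := x_d·i_d^st + E_r, Ψ_q^st := x_q·i_q^st, Ψ_r^st := (x_ad²/x_r)·i_d^st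 + E_r, Ψ_rd^st := (x_ad²/x_rd)·i_d^st + (x_ad/x_rd)·E_r, Ψ_rq^st := (x_aq²/x_rq)·i_q^st, and suppose the torque balance k·(Q^st)³/(C²·μ₀²·ω₀²) = Ψ_d^st·i_q^st − Ψ_q^st·i_d^st holds. Then the point x^st = (θ_Δ^st, 0, Q^st, Ψ_d^st, Ψ_q^st, Ψ_r^st, Ψ_rd^st, Ψ_rq^st, 0), with the algebraic variables taking the values i_d = i_d^st, i_q = i_q^st, E_q = E_r, E_rd = 0, E_rq = 0 (which satisfy all five flux-linkage relations), is an equilibrium of the system: F(x^st) = 0. -/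
open Real

/-- Deadband characteristic of the speed governor's measuring device. -/
noncomputable def chiS (z s : ℝ) : ℝ :=
  if s ≥ z / 2 then s - z / 2 else if s ≤ -z / 2 then s + z / 2 else 0

/-- Saturation modeling the maximal opening/closing velocities of the guide vanes. -/
noncomputable def chiRho (ρo ρc η : ℝ) : ℝ :=
  if η < ρo then ρo else if ρc < η then ρc else η

/-- Stroke saturation of the servomotor (limit stops of guide-vane position). -/
noncomputable def chiMu (μmin μmax μ₀ μΔ : ℝ) : ℝ :=
  if μ₀ + μΔ < μmin then μmin - μ₀ else if μ₀ + μΔ > μmax then μmax - μ₀ else μΔ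

/-- Stop correction: equals the clamped control signal ρ when the guide vanes
press against a limit stop in the direction of motion, and 0 otherwise. -/
noncomputable def xiRho (z σ ρo ρc μmin μmax μ₀ s μΔ : ℝ) : ℝ :=
  if (μΔ + μ₀ < μmin ∧ chiRho ρo ρc (-σ * chiS z s - chiMu μmin μmax μ₀ μΔ) < 0)
    ∨ (μΔ + μ₀ > μmax ∧ chiRho ρo ρc (-σ * chiS z s - chiMu μmin μmax μ₀ μΔ) > 0)
  then chiRho ρo ρc (-σ * chiS z s - chiMu μmin μmax μ₀ μΔ) else 0

/-- The stated stationary point x^st (with algebraic variables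
i_d = i_d^st, i_q = i_q^st, E_q = E_r, E_rd = 0, E_rq = 0, which satisfy all
five flux-linkage relations) is an equilibrium of the hydropower-unit system:
F(x^st) = 0. -/
theorem hydropower_operating_mode_is_equilibrium
    (ω₀ T_J T_c T_r T_rd T_rq S l ρ C k μ₀ p_u p_l r U θ₀ E_r σ z ρo ρc μmin μmax : ℝ)
    (x_d x_q x_ad x_aq x_r x_rd x_rq : ℝ)
    (F : ℝ × ℝ × ℝ × ℝ × ℝ × ℝ × ℝ × ℝ × ℝ → ℝ × ℝ × ℝ × ℝ × ℝ × ℝ × ℝ × ℝ × ℝ)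
    (hω₀ : 0 < ω₀) (hTJ : 0 < T_J) (hTc : 0 < T_c) (hTr : 0 < T_r)
    (hTrd : 0 < T_rd) (hTrq : 0 < T_rq) (hS : 0 < S) (hl : 0 < l) (hρ : 0 < ρ)
    (hC : 0 < C) (hk : 0 < k) (hμ₀ : 0 < μ₀) (hp : p_l < p_u)
    (hr : r ^ 2 + x_d * x_q ≠ 0) (hz : 0 < z) (hρo : ρo ≤ 0) (hρc : 0 ≤ ρc)
    (hμmin : μmin ≤ μ₀) (hμmax : μ₀ ≤ μmax)
    (θΔst θ Qst iDst iQst Ψdst Ψqst Ψrst Ψrdst Ψrqst : ℝ)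
    (hθ : θ = θ₀ + θΔst)
    (hQst : Qst = C * μ₀ * Real.sqrt (p_u - p_l))
    (hiD : iDst = (r * U * Real.sin θ + x_q * U * Real.cos θ - x_q * E_r) / (r ^ 2 + x_d * x_q))
    (hiQ : iQst = (x_d * U * Real.sin θ - r * U * Real.cos θ + r * E_r) / (r ^ 2 + x_d * x_q))
    (hΨd : Ψdst = x_d * iDst + E_r)
    (hΨq : Ψqst = x_q * iQst)
    (hΨr : Ψrst = x_ad ^ 2 / x_r * iDst + E_r)
    (hΨrd : Ψrdst = x_ad ^ 2 / x_rd * iDst + x_ad / x_rd * E_r)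
    (hΨrq : Ψrqst = x_aq ^ 2 / x_rq * iQst)
    (hbal : k * Qst ^ 3 / (C ^ 2 * μ₀ ^ 2 * ω₀ ^ 2) = Ψdst * iQst - Ψqst * iDst)
    (hF : ∀ θΔ s Q Ψd Ψq Ψr Ψrd Ψrq μΔ i_d i_q E_q E_rd E_rq : ℝ,
      Ψd = x_d * i_d + E_q + E_rq →
      Ψq = x_q * i_q - E_rd →
      Ψr = x_ad ^ 2 / x_r * i_d + E_q + x_ad / x_r * E_rq →
      Ψrd = x_ad ^ 2 / x_rd * i_d + E_rq + x_ad / x_rd * (E_q + E_rq) →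
      Ψrq = x_aq ^ 2 / x_rq * i_q - E_rd - x_aq / x_rq * E_rd →
      F (θΔ, s, Q, Ψd, Ψq, Ψr, Ψrd, Ψrq, μΔ) =
        (ω₀ * s,
         1 / T_J * (k * Q ^ 3 / (C ^ 2 * (μ₀ + μΔ) ^ 2 * ω₀ ^ 2 * (1 + s))
            - Ψd * i_q + Ψq * i_d),
         S / (l * ρ) * (p_u - p_l - Q ^ 2 / (C ^ 2 * (μ₀ + μΔ) ^ 2)),
         -ω₀ * (1 + s) * Ψq - ω₀ * r * i_d + ω₀ * U * Real.sin (θ₀ + θΔ),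
         ω₀ * (1 + s) * Ψd - ω₀ * r * i_q - ω₀ * U * Real.cos (θ₀ + θΔ),
         (E_r - E_q) / T_r,
         -E_rq / T_rd,
         E_rd / T_rq,
         chiRho ρo ρc (-σ * chiS z s - chiMu μmin μmax μ₀ μΔ
            - xiRho z σ ρo ρc μmin μmax μ₀ s μΔ) / T_c)) :
    (Ψdst = x_d * iDst + E_r + 0 ∧
     Ψqst = x_q * iQst - 0 ∧
     Ψrst = x_ad ^ 2 / x_r * iDst + E_r + x_ad / x_r * 0 ∧
     Ψrdst = x_ad ^ 2 / x_rd * iDst + 0 + x_ad / x_rd * (E_r + 0) ∧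
     Ψrqst = x_aq ^ 2 / x_rq * iQst - 0 - x_aq / x_rq * 0) ∧
    F (θΔst, 0, Qst, Ψdst, Ψqst, Ψrst, Ψrdst, Ψrqst, 0) = 0 := by
  have h1 : Ψdst = x_d * iDst + E_r + 0 := by rw [hΨd]; ring
  have h2 : Ψqst = x_q * iQst - 0 := by rw [hΨq]; ring
  have h3 : Ψrst = x_ad ^ 2 / x_r * iDst + E_r + x_ad / x_r * 0 := by rw [hΨr]; ring
  have h4 : Ψrdst = x_ad ^ 2 / x_rd * iDst + 0 + x_ad / x_rd * (E_r + 0) := by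
    rw [hΨrd]; ring
  have h5 : Ψrqst = x_aq ^ 2 / x_rq * iQst - 0 - x_aq / x_rq * 0 := by rw [hΨrq]; ring
  refine ⟨⟨h1, h2, h3, h4, h5⟩, ?_⟩
  rw [hF θΔst 0 Qst Ψdst Ψqst Ψrst Ψrdst Ψrqst 0 iDst iQst E_r 0 0 h1 h2 h3 h4 h5]
  have hC0 : C ≠ 0 := ne_of_gt hC
  have hμ0 : μ₀ ≠ 0 := ne_of_gt hμ₀
  have hQ2 : Qst ^ 2 = C ^ 2 * μ₀ ^ 2 * (p_u - p_l) := by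
    rw [hQst, mul_pow, mul_pow, Real.sq_sqrt (by linarith)]
  have hsin : r * iDst + x_q * iQst = U * Real.sin θ := by
    rw [hiD, hiQ, mul_div_assoc', mul_div_assoc', ← add_div, div_eq_iff hr]; ring
  have hcos : x_d * iDst - r * iQst = U * Real.cos θ - E_r := by
    rw [hiD, hiQ]; field_simp; ring
  have hchiS : chiS z 0 = 0 := by
    unfold chiS; rw [if_neg (by linarith), if_neg (by linarith)]
  have hchiMu : chiMu μmin μmax μ₀ 0 = 0 := by
    unfold chiMu; rw [if_neg (by linarith), if_neg (by linarith)]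
  have hchiRho0 : chiRho ρo ρc 0 = 0 := by
    unfold chiRho; rw [if_neg (by linarith), if_neg (by linarith)]
  have hxi : xiRho z σ ρo ρc μmin μmax μ₀ 0 0 = 0 := by
    unfold xiRho
    rw [if_neg (by rintro (⟨h, -⟩ | ⟨h, -⟩) <;> linarith)]
  have hθsin : Real.sin (θ₀ + θΔst) = Real.sin θ := by rw [hθ]
  have hθcos : Real.cos (θ₀ + θΔst) = Real.cos θ := by rw [hθ]
  refine Prod.ext (by norm_num) (Prod.ext ?_ (Prod.ext ?_ (Prod.ext ?_ (Prod.ext ?_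
    (Prod.ext (by norm_num) (Prod.ext (by norm_num) (Prod.ext (by norm_num) ?_)))))))
  · show 1 / T_J * (k * Qst ^ 3 / (C ^ 2 * (μ₀ + 0) ^ 2 * ω₀ ^ 2 * (1 + 0))
        - Ψdst * iQst + Ψqst * iDst) = 0
    rw [add_zero, add_zero, mul_one]
    rw [hbal]; ring
  · show S / (l * ρ) * (p_u - p_l - Qst ^ 2 / (C ^ 2 * (μ₀ + 0) ^ 2)) = 0
    rw [add_zero, hQ2]
    field_simp
    ring
  · show -ω₀ * (1 + 0) * Ψqst - ω₀ * r * iDst + ω₀ * U * Real.sin (θ₀ + θΔst) = 0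
    rw [hθsin, hΨq]
    linear_combination (-ω₀) * hsin
  · show ω₀ * (1 + 0) * Ψdst - ω₀ * r * iQst - ω₀ * U * Real.cos (θ₀ + θΔst) = 0
    rw [hθcos, hΨd]
    linear_combination ω₀ * hcos
  · show chiRho ρo ρc (-σ * chiS z 0 - chiMu μmin μmax μ₀ 0
        - xiRho z σ ρo ρc μmin μmax μ₀ 0 0) / T_c = 0
    rw [hchiS, hchiMu, hxi]
    norm_num [hchiRho0]
end
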